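/- Let d ≥ 1 and α ∈ ℝ. The smooth function ψ_{α,d}(x) = (1 + |x|²)^{(2−d)/4 − α/2} satisfies the zero-energy Schrödinger equation Δψ_{α,d}(x) = V_{α,d}(x) · ψ_{α,d}(x) for every x ∈ ℝ^d, where V_{α,d}(x) = (4α² − (d−2)²)/(4(1 + |x|²)) + (1 − (α + d/2)²)/(1 + |x|²)². -/

import Mathlib

open MeasureTheory Real Filter

noncomputable section

/-- The Laplacian `Δ f = ∑ i ∂²f/∂x_i²` on `ℝ^d`. -/
def laplacian {d : ℕ} (f : EuclideanSpace ℝ (Fin d) → ℝ) (x : EuclideanSpace ℝ (Fin d)) : ℝ :=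
  ∑ i : Fin d, fderiv ℝ (fun y => fderiv ℝ f y (EuclideanSpace.single i 1)) x
    (EuclideanSpace.single i 1)

/-- The function `ψ_{α,d}(x) = (1 + |x|²)^{(2−d)/4 − α/2}`. -/
def psiAD (d : ℕ) (α : ℝ) (x : EuclideanSpace ℝ (Fin d)) : ℝ :=
  (1 + ‖x‖ ^ 2) ^ ((2 - (d : ℝ)) / 4 - α / 2)

/-- The potential `V_{α,d}(x) = (4α² − (d−2)²)/(4(1+|x|²)) + (1 − (α+d/2)²)/(1+|x|²)²`. -/
def Vad (d : ℕ) (α : ℝ) (x : EuclideanSpace ℝ (Fin d)) : ℝ :=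
  (4 * α ^ 2 - ((d : ℝ) - 2) ^ 2) / (4 * (1 + ‖x‖ ^ 2))
    + (1 - (α + (d : ℝ) / 2) ^ 2) / (1 + ‖x‖ ^ 2) ^ 2

lemma one_add_norm_sq_pos {d : ℕ} (x : EuclideanSpace ℝ (Fin d)) : (0:ℝ) < 1 + ‖x‖ ^ 2 := by
  positivity

/-- derivative of `y ↦ (1 + ‖y‖²)^q` -/
lemma hasFDerivAt_aux {d : ℕ} (q : ℝ) (x : EuclideanSpace ℝ (Fin d)) :
    HasFDerivAt (fun y : EuclideanSpace ℝ (Fin d) => (1 + ‖y‖ ^ 2) ^ q)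
      ((q * (1 + ‖x‖ ^ 2) ^ (q - 1)) • (2 • (innerSL ℝ x))) x := by
  have h1 : HasFDerivAt (fun y : EuclideanSpace ℝ (Fin d) => 1 + ‖y‖ ^ 2)
      (2 • (innerSL ℝ x)) x :=
    (hasStrictFDerivAt_norm_sq x).hasFDerivAt.const_add 1
  have h2 : HasDerivAt (fun u : ℝ => u ^ q) (q * (1 + ‖x‖ ^ 2) ^ (q - 1)) (1 + ‖x‖ ^ 2) := by
    simpa [mul_comm] using
      Real.hasDerivAt_rpow_const (p := q) (Or.inl (one_add_norm_sq_pos x).ne')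
  exact h2.comp_hasFDerivAt x h1

/-- The smooth function `ψ_{α,d}` solves the zero-energy Schrödinger equation
`Δψ_{α,d} = V_{α,d} ψ_{α,d}` on all of `ℝ^d`. -/
theorem psiAD_zero_energy_equation (d : ℕ) (hd : 1 ≤ d) (α : ℝ) :
    ContDiff ℝ (⊤ : ℕ∞) (psiAD d α) ∧
    ∀ x : EuclideanSpace ℝ (Fin d), laplacian (psiAD d α) x = Vad d α x * psiAD d α x := by
  set p : ℝ := (2 - (d : ℝ)) / 4 - α / 2 with hp
  constructor
  · rw [contDiff_iff_contDiffAt]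
    intro x
    exact (contDiffAt_const.add (contDiff_norm_sq ℝ).contDiffAt).rpow_const_of_ne
      (one_add_norm_sq_pos x).ne'
  intro x
  have hu : (0:ℝ) < 1 + ‖x‖ ^ 2 := one_add_norm_sq_pos x
  -- first derivative of psiAD along e_i, as a function of y
  have hfd : ∀ (i : Fin d) (y : EuclideanSpace ℝ (Fin d)),
      fderiv ℝ (psiAD d α) y (EuclideanSpace.single i 1)
        = 2 * p * (1 + ‖y‖ ^ 2) ^ (p - 1) * y i := by
    intro i y
    have hps : psiAD d α = fun y : EuclideanSpace ℝ (Fin d) => (1 + ‖y‖ ^ 2) ^ p := rfl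
    rw [hps, (hasFDerivAt_aux p y).fderiv]
    simp [real_inner_smul_left, EuclideanSpace.inner_single_right, real_inner_comm]
    ring
  -- second derivative along e_i
  have hsec : ∀ i : Fin d,
      fderiv ℝ (fun y => fderiv ℝ (psiAD d α) y (EuclideanSpace.single i 1)) x
        (EuclideanSpace.single i 1)
      = 2 * p * (1 + ‖x‖ ^ 2) ^ (p - 1)
        + 4 * p * (p - 1) * (1 + ‖x‖ ^ 2) ^ (p - 2) * (x i) ^ 2 := by
    intro i
    have hrw : (fun y => fderiv ℝ (psiAD d α) y (EuclideanSpace.single i 1))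
        = fun y : EuclideanSpace ℝ (Fin d) =>
            (2 * p) * ((1 + ‖y‖ ^ 2) ^ (p - 1) * y i) := by
      funext y
      rw [hfd i y]; ring
    rw [hrw]
    have hc : HasFDerivAt (fun y : EuclideanSpace ℝ (Fin d) => (1 + ‖y‖ ^ 2) ^ (p - 1))
        (((p - 1) * (1 + ‖x‖ ^ 2) ^ (p - 1 - 1)) • (2 • (innerSL ℝ x))) x :=
      hasFDerivAt_aux (p - 1) x
    have hproj : HasFDerivAt (fun y : EuclideanSpace ℝ (Fin d) => y i)
        (EuclideanSpace.proj (𝕜 := ℝ) i) x := (EuclideanSpace.proj (𝕜 := ℝ) i).hasFDerivAt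
    have hmul := (hc.mul hproj).const_mul (2 * p)
    simp only [Pi.mul_apply] at hmul
    rw [hmul.fderiv]
    have hsingle : (EuclideanSpace.single i (1:ℝ)) i = 1 := by
      simp [EuclideanSpace.single_apply]
    simp [real_inner_smul_left, EuclideanSpace.inner_single_right, real_inner_comm, hsingle]
    have : p - 1 - 1 = p - 2 := by ring
    rw [this]
    ring
  unfold laplacian
  simp only [hsec]
  rw [Finset.sum_add_distrib, Finset.sum_const, Finset.card_univ, Fintype.card_fin,
    ← Finset.mul_sum]
  have hnorm : ∑ i : Fin d, (x i) ^ 2 = ‖x‖ ^ 2 := by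
    rw [PiLp.norm_sq_eq_of_L2]
    simp [Real.norm_eq_abs, sq_abs]
  rw [hnorm]
  -- final algebra
  set s : ℝ := ‖x‖ ^ 2 with hs
  have hu' : (0:ℝ) < 1 + s := hu
  have h1 : (1 + s) ^ (p - 1) = (1 + s) ^ p / (1 + s) := by
    rw [Real.rpow_sub hu', Real.rpow_one]
  have h2 : (1 + s) ^ (p - 2) = (1 + s) ^ p / (1 + s) ^ 2 := by
    rw [Real.rpow_sub hu', Real.rpow_two]
  have hV : Vad d α x = (4 * α ^ 2 - ((d : ℝ) - 2) ^ 2) / (4 * (1 + s))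
      + (1 - (α + (d : ℝ) / 2) ^ 2) / (1 + s) ^ 2 := rfl
  have hpsi : psiAD d α x = (1 + s) ^ p := rfl
  rw [h1, h2, hV, hpsi, hp]
  have hne : (1 + s) ≠ 0 := hu'.ne'
  simp only [nsmul_eq_mul]
  field_simp
  ring
end
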